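/- Let C > 0, R > 0 and T0 ≥ 0. Suppose v1, v2 : ℝ → ℝ are differentiable and satisfy C·v1'(t) = -(v1(t) - v2(t))/R and C·v2'(t) = (v1(t) - v2(t))/R for all t. Then the energy received by the second capacitor, ΔE_receive := (C/2)·(v2(T0)² - v2(0)²), equals (1/8)·C·(v1(0) - v2(0))·(1 - exp(-2·T0/(C·R)))·((v1(0) + 3·v2(0)) - (v1(0) - v2(0))·exp(-2·T0/(C·R))). -/

import Mathlib

/-!
The sum `v1 + v2` is conserved, while the difference `v1 - v2` obeys `d' = -2 d / (C R)` and so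
decays like `exp (-2 t / (C R))`. Hence `v2 t` is explicit, and the received energy is the
difference of two squares of such expressions.
-/

open Real

theorem eq_mul_exp_of_deriv_eq_mul {f : ℝ → ℝ} {a : ℝ} (hf : Differentiable ℝ f)
    (hderiv : ∀ t, deriv f t = a * f t) (t : ℝ) : f t = f 0 * exp (a * t) := by
  have hconst : ∀ s, deriv (fun s => f s * exp (-(a * s))) s = 0 := by
    intro s
    have hexp : HasDerivAt (fun s => exp (-(a * s))) (exp (-(a * s)) * -(a * 1)) s :=
      ((hasDerivAt_id s).const_mul a).neg.exp
    rw [((hf s).hasDerivAt.fun_mul hexp).deriv, hderiv]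
    ring
  have hdiff : Differentiable ℝ (fun s => f s * exp (-(a * s))) := by fun_prop
  have key := is_const_of_deriv_eq_zero hdiff hconst t 0
  simp only [mul_zero, neg_zero, exp_zero, mul_one] at key
  rw [← key, mul_assoc, ← exp_add, neg_add_cancel, exp_zero, mul_one]

section CoupledCapacitors

variable {v1 v2 : ℝ → ℝ} {κ : ℝ} (hd1 : Differentiable ℝ v1) (hd2 : Differentiable ℝ v2)
  (h1 : ∀ t, deriv v1 t = -κ * (v1 t - v2 t)) (h2 : ∀ t, deriv v2 t = κ * (v1 t - v2 t))
include hd1 hd2 h1 h2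

theorem add_eq_add_of_coupled (t : ℝ) : v1 t + v2 t = v1 0 + v2 0 := by
  refine is_const_of_deriv_eq_zero (hd1.add hd2) (fun s => ?_) t 0
  rw [deriv_add (hd1 s) (hd2 s), h1, h2]
  ring

theorem sub_eq_mul_exp_of_coupled (t : ℝ) :
    v1 t - v2 t = (v1 0 - v2 0) * exp (-2 * κ * t) := by
  refine eq_mul_exp_of_deriv_eq_mul (f := fun s => v1 s - v2 s) (hd1.sub hd2) (fun s => ?_) t
  rw [deriv_fun_sub (hd1 s) (hd2 s), h1, h2]
  ring

theorem snd_eq_of_coupled (t : ℝ) :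
    v2 t = ((v1 0 + v2 0) - (v1 0 - v2 0) * exp (-2 * κ * t)) / 2 := by
  linarith [add_eq_add_of_coupled hd1 hd2 h1 h2 t, sub_eq_mul_exp_of_coupled hd1 hd2 h1 h2 t]

end CoupledCapacitors

theorem router_router_energy_received_general
    (C R T0 : ℝ) (hC : 0 < C)
    (v1 v2 : ℝ → ℝ) (hd1 : Differentiable ℝ v1) (hd2 : Differentiable ℝ v2)
    (h1 : ∀ t, C * deriv v1 t = -(v1 t - v2 t) / R)
    (h2 : ∀ t, C * deriv v2 t = (v1 t - v2 t) / R) :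
    (C / 2) * ((v2 T0)^2 - (v2 0)^2) =
      (1/8) * C * (v1 0 - v2 0) * (1 - Real.exp (-2 * T0 / (C * R))) *
        ((v1 0 + 3 * v2 0) - (v1 0 - v2 0) * Real.exp (-2 * T0 / (C * R))) := by
  have hC0 : C ≠ 0 := hC.ne'
  have hdv1 : ∀ t, deriv v1 t = -(1 / (C * R)) * (v1 t - v2 t) := fun t => by
    rw [← mul_div_cancel_left₀ (deriv v1 t) hC0, h1]
    ring
  have hdv2 : ∀ t, deriv v2 t = 1 / (C * R) * (v1 t - v2 t) := fun t => by
    rw [← mul_div_cancel_left₀ (deriv v2 t) hC0, h2]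
    ring
  have hexp : -2 * (1 / (C * R)) * T0 = -2 * T0 / (C * R) := by ring
  rw [snd_eq_of_coupled hd1 hd2 hdv1 hdv2 T0, hexp]
  ring

theorem router_router_energy_received
    (C R T0 : ℝ) (hC : 0 < C) (hR : 0 < R) (hT0 : 0 ≤ T0)
    (v1 v2 : ℝ → ℝ) (hd1 : Differentiable ℝ v1) (hd2 : Differentiable ℝ v2)
    (h1 : ∀ t, C * deriv v1 t = -(v1 t - v2 t) / R)
    (h2 : ∀ t, C * deriv v2 t = (v1 t - v2 t) / R) :
    (C / 2) * ((v2 T0)^2 - (v2 0)^2) =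
      (1/8) * C * (v1 0 - v2 0) * (1 - Real.exp (-2 * T0 / (C * R))) *
        ((v1 0 + 3 * v2 0) - (v1 0 - v2 0) * Real.exp (-2 * T0 / (C * R))) :=
  router_router_energy_received_general C R T0 hC v1 v2 hd1 hd2 h1 h2
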